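/- Let {|ψ_k⟩}_{k=1}^K ⊂ ℂ^d contain the standard basis vectors e_1, …, e_d, and suppose W is a unitary on ℂ^d such that every |ψ_k⟩ is an eigenvector of W (with unimodular eigenvalues e^{iα_k}). If the set also contains, for every pair m ≠ n, some state with nonzero components along both e_m and e_n, then all eigenvalues coincide, i.e. W is a unimodular scalar multiple of the identity. -/

import Mathlib

/-! Since every `e_m` is an eigenvector, `W` is diagonal. An eigenvector with nonzero `m`-th and
`n`-th coordinates then forces the `m`-th and `n`-th diagonal entries to both equal its eigenvalue,
so the diagonal is constant, and its value is the unimodular eigenvalue of any `e_m`. -/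

namespace Matrix

variable {n R : Type*} [Fintype n] [DecidableEq n] [Semiring R]

theorem col_eq_single_of_mulVec_single_eq_smul {W : Matrix n n R} {m : n} {c : R}
    (h : W *ᵥ Pi.single m 1 = c • Pi.single m 1) : W.col m = Pi.single m c := by
  rw [← mulVec_single_one, h, ← Pi.single_smul, smul_eq_mul, mul_one]

theorem eq_diagonal_of_forall_mulVec_single_eq_smul {W : Matrix n n R}
    (h : ∀ m, ∃ c : R, W *ᵥ Pi.single m 1 = c • Pi.single m 1) : W = diagonal W.diag := by
  ext i j
  obtain ⟨c, hc⟩ := h j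
  have hcol := congrFun (col_eq_single_of_mulVec_single_eq_smul hc)
  rcases eq_or_ne i j with rfl | hij
  · simp
  · simpa [diagonal_apply_ne _ hij, Pi.single_eq_of_ne hij] using hcol i

theorem apply_eq_of_diagonal_mulVec_eq_smul [IsDomain R] {D v : n → R} {c : R}
    (h : diagonal D *ᵥ v = c • v) {i : n} (hi : v i ≠ 0) : D i = c :=
  mul_right_cancel₀ hi (by rw [← mulVec_diagonal, h, Pi.smul_apply, smul_eq_mul])

theorem eq_smul_one_of_forall_mulVec_eq_smul [IsDomain R] {ι : Type*} {W : Matrix n n R}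
    (ψ : ι → n → R) (heig : ∀ k, ∃ c : R, W *ᵥ ψ k = c • ψ k)
    (hstd : ∀ m, ∃ k, ψ k = Pi.single m 1)
    (hpair : ∀ m m', m ≠ m' → ∃ k, ψ k m ≠ 0 ∧ ψ k m' ≠ 0) (m : n) :
    W = W m m • 1 := by
  have hdiag : W = diagonal W.diag := eq_diagonal_of_forall_mulVec_single_eq_smul fun m' => by
    obtain ⟨k, hk⟩ := hstd m'
    simpa [hk] using heig k
  have hconst : ∀ m', W m' m' = W m m := by
    intro m'
    rcases eq_or_ne m' m with rfl | hne
    · rfl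
    obtain ⟨k, hm', hm⟩ := hpair m' m hne
    obtain ⟨c, hc⟩ := heig k
    rw [hdiag] at hc
    exact (apply_eq_of_diagonal_mulVec_eq_smul hc hm').trans
      (apply_eq_of_diagonal_mulVec_eq_smul hc hm).symm
  calc W = diagonal W.diag := hdiag
    _ = diagonal fun _ => W m m := congrArg diagonal (funext hconst)
    _ = W m m • 1 := (smul_one_eq_diagonal _).symm

end Matrix

theorem stmt_10_general {d K : ℕ} (W : Matrix (Fin d) (Fin d) ℂ)
    (ψ : Fin K → (Fin d → ℂ))
    (heig : ∀ k, ∃ α : ℝ, W.mulVec (ψ k) = Complex.exp (Complex.I * α) • ψ k)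
    (hstd : ∀ m : Fin d, ∃ k, ψ k = Pi.single m 1)
    (hpair : ∀ m n : Fin d, m ≠ n → ∃ k, ψ k m ≠ 0 ∧ ψ k n ≠ 0) :
    ∃ c : ℂ, ‖c‖ = 1 ∧ W = c • (1 : Matrix (Fin d) (Fin d) ℂ) := by
  rcases isEmpty_or_nonempty (Fin d) with _ | ⟨⟨m⟩⟩
  · exact ⟨1, norm_one, Subsingleton.elim _ _⟩
  obtain ⟨k, hk⟩ := hstd m
  obtain ⟨α, hα⟩ := heig k
  rw [hk] at hα
  have hWmm : W m m = Complex.exp (Complex.I * α) := by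
    simpa using congrFun (Matrix.col_eq_single_of_mulVec_single_eq_smul hα) m
  refine ⟨W m m, by rw [hWmm, mul_comm, Complex.norm_exp_ofReal_mul_I], ?_⟩
  exact Matrix.eq_smul_one_of_forall_mulVec_eq_smul ψ
    (fun k => let ⟨_, h⟩ := heig k; ⟨_, h⟩) hstd hpair m

theorem stmt_10 {d K : ℕ} (W : Matrix (Fin d) (Fin d) ℂ)
    (hW : W ∈ Matrix.unitaryGroup (Fin d) ℂ)
    (ψ : Fin K → (Fin d → ℂ))
    (heig : ∀ k, ∃ α : ℝ, W.mulVec (ψ k) = Complex.exp (Complex.I * α) • ψ k)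
    (hstd : ∀ m : Fin d, ∃ k, ψ k = Pi.single m 1)
    (hpair : ∀ m n : Fin d, m ≠ n → ∃ k, ψ k m ≠ 0 ∧ ψ k n ≠ 0) :
    ∃ c : ℂ, ‖c‖ = 1 ∧ W = c • (1 : Matrix (Fin d) (Fin d) ℂ) :=
  stmt_10_general W ψ heig hstd hpair
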